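/- For s₀₁,s₀₂,s₁₁,s₁₂ ∈ ℤ[i], φ = (1+√5)/2, α = 1+i(1−φ), θ = σ(α), ψ = σ(φ), the Golden Code matrix X = (1/√5)·[[s₀₁α + s₀₂αφ, i(s₁₁θ + s₁₂θψ)],[s₁₁α + s₁₂αφ, s₀₁θ + s₀₂θψ]] has determinant zero only if all four sᵢⱼ are zero. -/

import Mathlib

open Complex Matrix GaussianInt

noncomputable section

def phi : ℂ := (1 + Real.sqrt 5) / 2
def psi : ℂ := (1 - Real.sqrt 5) / 2
def alpha : ℂ := 1 + Complex.I * (1 - phi)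
def theta : ℂ := 1 + Complex.I * (1 - psi)

/-- The Golden Code matrix associated to Gaussian integers `s₀₁, s₀₂, s₁₁, s₁₂`. -/
def goldenCode (s₀₁ s₀₂ s₁₁ s₁₂ : GaussianInt) : Matrix (Fin 2) (Fin 2) ℂ :=
  (1 / (Real.sqrt 5 : ℂ)) •
    !![toComplex s₀₁ * alpha + toComplex s₀₂ * alpha * phi,
        Complex.I * (toComplex s₁₁ * theta + toComplex s₁₂ * theta * psi);
      toComplex s₁₁ * alpha + toComplex s₁₂ * alpha * phi,
        toComplex s₀₁ * theta + toComplex s₀₂ * theta * psi]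

def fG : GaussianInt →+* ZMod 5 := Zsqrtd.lift ⟨3, by decide⟩

lemma fG_apply (x : GaussianInt) : fG x = (x.re : ZMod 5) + (x.im : ZMod 5) * 3 := by
  simp [fG, Zsqrtd.lift_apply_apply]

lemma pi_dvd (x : GaussianInt) (h : fG x = 0) : (⟨2,1⟩ : GaussianInt) ∣ x := by
  rw [fG_apply] at h
  have h5 : (5 : ℤ) ∣ x.re + 3 * x.im := by
    have : ((x.re + 3 * x.im : ℤ) : ZMod 5) = 0 := by push_cast; linear_combination h
    exact_mod_cast (ZMod.intCast_zmod_eq_zero_iff_dvd _ 5).mp this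
  obtain ⟨k, hk⟩ := h5
  refine ⟨⟨2*k - x.im, x.im - k⟩, ?_⟩
  ext <;> simp [Zsqrtd.re_mul, Zsqrtd.im_mul] <;> omega

lemma key5 : ∀ A B C D : ZMod 5, A^2 + A*B - B^2 = 3*(C^2 + C*D - D^2) →
    2*A + B = 0 ∧ 2*C + D = 0 := by decide

lemma key5' : ∀ B D : ZMod 5, B^2 = 3*D^2 → B = 0 ∧ D = 0 := by decide

lemma key5'' : ∀ A B : ZMod 5, 2*A + B = 0 → B = 0 → A = 0 := by decide

lemma descent (n : ℕ) : ∀ a b c d : GaussianInt,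
    a.norm.natAbs + b.norm.natAbs + c.norm.natAbs + d.norm.natAbs ≤ n →
    a^2 + a*b - b^2 = ⟨0,1⟩ * (c^2 + c*d - d^2) →
    a = 0 ∧ b = 0 ∧ c = 0 ∧ d = 0 := by
  induction n using Nat.strong_induction_on with
  | _ n ih =>
    intro a b c d hn heq
    have hf : (fG a)^2 + fG a * fG b - (fG b)^2 = 3 * ((fG c)^2 + fG c * fG d - (fG d)^2) := by
      have := congrArg fG heq
      simpa [map_add, _root_.map_mul, map_sub, map_pow, show fG ⟨0,1⟩ = 3 from by decide] using this
    obtain ⟨hab, hcd⟩ := key5 _ _ _ _ hf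
    have he' : fG (2*a + b) = 0 := by
      simp only [map_add, _root_.map_mul, map_ofNat]; linear_combination hab
    have hg' : fG (2*c + d) = 0 := by
      simp only [map_add, _root_.map_mul, map_ofNat]; linear_combination hcd
    obtain ⟨e, he⟩ := pi_dvd _ he'
    obtain ⟨g, hg⟩ := pi_dvd _ hg'
    set p : GaussianInt := ⟨2,1⟩ with hp
    set q : GaussianInt := ⟨2,-1⟩ with hq
    have hpq : p * q = 5 := by decide
    set i : GaussianInt := ⟨0,1⟩ with hi
    have h2 : p * (p*e^2 - q*b^2) = p * (i*(p*g^2 - q*d^2)) := by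
      linear_combination 4*heq - (2*a+b+p*e)*he + i*(2*c+d+p*g)*hg + (i*d^2 - b^2)*hpq
    have h3 : p*e^2 - q*b^2 = i*(p*g^2 - q*d^2) :=
      mul_left_cancel₀ (show p ≠ 0 from by decide) h2
    have hf3 : (fG b)^2 = 3 * (fG d)^2 := by
      have := congrArg fG h3
      simp only [map_sub, _root_.map_mul, map_pow, show fG p = 0 from by decide,
        show fG q = -1 from by decide, show fG i = 3 from by decide] at this
      linear_combination this
    obtain ⟨hb0, hd0⟩ := key5' _ _ hf3
    have ha0 : fG a = 0 := key5'' _ _ hab hb0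
    have hc0 : fG c = 0 := key5'' _ _ hcd hd0
    obtain ⟨a₁, ha⟩ := pi_dvd a ha0
    obtain ⟨b₁, hb⟩ := pi_dvd b hb0
    obtain ⟨c₁, hc⟩ := pi_dvd c hc0
    obtain ⟨d₁, hd⟩ := pi_dvd d hd0
    have heq' : a₁^2 + a₁*b₁ - b₁^2 = i * (c₁^2 + c₁*d₁ - d₁^2) := by
      have h4 : p^2 * (a₁^2 + a₁*b₁ - b₁^2) = p^2 * (i * (c₁^2 + c₁*d₁ - d₁^2)) := by
        linear_combination heq - ((a+p*a₁)+p*b₁)*ha - (a - (b+p*b₁))*hb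
          + i*((c+p*c₁)+p*d₁)*hc + i*(c - (d+p*d₁))*hd
      exact mul_left_cancel₀ (show (p:GaussianInt)^2 ≠ 0 from by decide) h4
    have hna : a.norm.natAbs = 5 * a₁.norm.natAbs := by
      rw [ha, Zsqrtd.norm_mul, Int.natAbs_mul]; rfl
    have hnb : b.norm.natAbs = 5 * b₁.norm.natAbs := by
      rw [hb, Zsqrtd.norm_mul, Int.natAbs_mul]; rfl
    have hnc : c.norm.natAbs = 5 * c₁.norm.natAbs := by
      rw [hc, Zsqrtd.norm_mul, Int.natAbs_mul]; rfl
    have hnd : d.norm.natAbs = 5 * d₁.norm.natAbs := by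
      rw [hd, Zsqrtd.norm_mul, Int.natAbs_mul]; rfl
    rcases Nat.eq_zero_or_pos (a.norm.natAbs + b.norm.natAbs + c.norm.natAbs + d.norm.natAbs)
      with h0 | hpos
    · have hz : ∀ x : GaussianInt, x.norm.natAbs = 0 → x = 0 := fun x hx => by
        rwa [← Zsqrtd.norm_eq_zero_iff (by norm_num : (-1:ℤ) < 0), ← Int.natAbs_eq_zero]
      exact ⟨hz a (by omega), hz b (by omega), hz c (by omega), hz d (by omega)⟩
    · set m := a₁.norm.natAbs + b₁.norm.natAbs + c₁.norm.natAbs + d₁.norm.natAbs with hm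
      obtain ⟨ha₁, hb₁, hc₁, hd₁⟩ := ih m (by omega) a₁ b₁ c₁ d₁ le_rfl heq'
      subst ha₁ hb₁ hc₁ hd₁
      simp only [mul_zero] at ha hb hc hd
      exact ⟨ha, hb, hc, hd⟩

/-- The Golden Code matrix has determinant zero only if all four symbols vanish. -/
theorem stmt_12 (s₀₁ s₀₂ s₁₁ s₁₂ : GaussianInt)
    (h : (goldenCode s₀₁ s₀₂ s₁₁ s₁₂).det = 0) :
    s₀₁ = 0 ∧ s₀₂ = 0 ∧ s₁₁ = 0 ∧ s₁₂ = 0 := by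
  set A := toComplex s₀₁
  set B := toComplex s₀₂
  set C := toComplex s₁₁
  set D := toComplex s₁₂
  have hs5 : (Real.sqrt 5 : ℂ) * (Real.sqrt 5 : ℂ) = 5 := by
    rw [← Complex.ofReal_mul]
    norm_cast
    exact Real.mul_self_sqrt (by norm_num)
  have hsne : (Real.sqrt 5 : ℂ) ≠ 0 :=
    Complex.ofReal_ne_zero.mpr (by positivity)
  have h' : (A * alpha + B * alpha * phi) * (A * theta + B * theta * psi) -
      Complex.I * (C * theta + D * theta * psi) * (C * alpha + D * alpha * phi) = 0 := by
    have hd := h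
    rw [goldenCode, Matrix.det_smul, Matrix.det_fin_two_of] at hd
    have hne : (1 / (Real.sqrt 5 : ℂ)) ^ (2 : ℕ) ≠ 0 := by
      simp [hsne]
    rcases mul_eq_zero.mp hd with h1 | h1
    · exact absurd h1 hne
    · linear_combination h1
  have hsum : phi + psi = 1 := by unfold phi psi; ring
  have hprod : phi * psi = -1 := by
    unfold phi psi; linear_combination (-(1/4) : ℂ) * hs5
  have hat : alpha * theta = 2 + Complex.I := by
    unfold alpha theta
    linear_combination ((1-phi)*(1-psi)) * Complex.I_mul_I + (1 - Complex.I) * hsum - hprod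
  have expand : ∀ X Y : ℂ, (X * alpha + Y * alpha * phi) * (X * theta + Y * theta * psi) =
      (2 + Complex.I) * (X^2 + X*Y - Y^2) := by
    intro X Y
    linear_combination (X^2 + X*Y*(phi+psi) + Y^2*(phi*psi)) * hat +
      (2 + Complex.I)*X*Y*hsum + (2 + Complex.I)*Y^2*hprod
  have eAB := expand A B
  have eCD := expand C D
  have h2 : (2 + Complex.I) * ((A^2 + A*B - B^2) - Complex.I*(C^2 + C*D - D^2)) = 0 := by
    linear_combination h' - eAB + Complex.I * eCD
  have h2I : (2 + Complex.I) ≠ 0 := by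
    intro hh
    have := congrArg Complex.im hh
    simp at this
  have hQ : (A^2 + A*B - B^2) - Complex.I*(C^2 + C*D - D^2) = 0 :=
    (mul_eq_zero.mp h2).resolve_left h2I
  have hG : s₀₁^2 + s₀₁*s₀₂ - s₀₂^2 = ⟨0,1⟩ * (s₁₁^2 + s₁₁*s₁₂ - s₁₂^2) := by
    apply toComplex_injective
    have hiI : toComplex (⟨0,1⟩ : GaussianInt) = Complex.I := by
      simp [toComplex_def]
    simp only [map_add, _root_.map_mul, map_sub, map_pow, hiI]
    linear_combination hQ
  exact descent _ s₀₁ s₀₂ s₁₁ s₁₂ le_rfl hG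

end
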